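/- Let k be an even integer and t an odd integer with 0 < t < k. Let H = (V,E) be a k-uniform hypergraph with n vertices, m ≥ 1 edges, and minimum degree δ, and let λ be the least element of the set {k·∑_{e∈E} ∏_{i∈e} x_i : x ∈ ℝ^V, ∑_{i∈V} x_i^k = 1}. If α_t(H) = t(km − nλ)·(−λ)^{t/(k−t)} / ( (k−t)·δ^{k/(k−t)} + (kδ − tλ)·(−λ)^{t/(k−t)} ), then there exists a t-independent set S with |S| = α_t(H) such that every vertex in S has degree δ and every vertex i ∉ S satisfies |{e ∈ E(i) : e ∩ S ≠ ∅}| = ( (−λ)^{k/(k−t)} + d_i·(−λ)^{t/(k−t)} ) / ( δ^{t/(k−t)} + (−λ)^{t/(k−t)} ). -/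

import Mathlib

/-!
Test the form on the vector `x` equal to `r = (δ / -λ)^{1/(k-t)}` on a `t`-independent set `S` of size
`α` and to `-1` elsewhere. As `k` is even and `t` odd, an edge meeting `S` contributes `-r^t` to
`∑_e ∏_{i ∈ e} x_i` and every other edge contributes `1`; with the double count
`∑_{i ∈ S} d_i = t · #{e : e ∩ S ≠ ∅} ≥ α δ` this gives `t k ∑_e ∏ x_i ≤ k (t m - α δ (1 + r^t))`, and the
assumed value of `α` turns the right side into `t λ ∑ x_i^k`. Minimality of `λ` forces equality
throughout: the vertices of `S` have degree `δ`, and `x` minimises the form on the sphere, so it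
satisfies the eigen-equation `∑_{e ∋ i} ∏_{j ∈ e \ i} x_j = λ x_i^{k-1}`, which at `i ∉ S` reads
`#{e ∋ i : e ∩ S ≠ ∅} (1 + r^t) = d_i - λ`.
-/

open Finset

section AdjacencyForm

variable {V : Type*}

def adjForm (E : Finset (Finset V)) (x : V → ℝ) : ℝ := ∑ e ∈ E, ∏ i ∈ e, x i

def unitSphereValues [Fintype V] (k : ℕ) (E : Finset (Finset V)) : Set ℝ :=
  {y | ∃ x : V → ℝ, ∑ i, x i ^ k = 1 ∧ y = k * adjForm E x}

lemma adjForm_smul {k : ℕ} {E : Finset (Finset V)} (huniform : ∀ e ∈ E, #e = k) (s : ℝ)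
    (x : V → ℝ) : adjForm E (s • x) = s ^ k * adjForm E x := by
  simp only [adjForm, mul_sum, Pi.smul_apply, smul_eq_mul, prod_mul_distrib, prod_const]
  exact sum_congr rfl fun e he => by rw [huniform e he]

lemma adjForm_update [DecidableEq V] (E : Finset (Finset V)) (x : V → ℝ) (v : V) (s : ℝ) :
    adjForm E (Function.update x v s) =
      ∑ e ∈ E with v ∉ e, ∏ i ∈ e, x i + s * ∑ e ∈ E with v ∈ e, ∏ i ∈ e.erase v, x i := by
  rw [adjForm, ← sum_filter_not_add_sum_filter E (v ∈ ·), mul_sum]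
  congr 1
  · exact sum_congr rfl fun e he => prod_update_of_notMem (mem_filter.1 he).2 _ _
  · refine sum_congr rfl fun e he => ?_
    rw [prod_update_of_mem (mem_filter.1 he).2, sdiff_singleton_eq_erase]

variable [Fintype V] {k : ℕ} {E : Finset (Finset V)} {lam : ℝ}

lemma mul_sum_pow_le_of_isLeast (hk : Even k) (hk0 : k ≠ 0) (huniform : ∀ e ∈ E, #e = k)
    (hlam : IsLeast (unitSphereValues k E) lam) (x : V → ℝ) :
    lam * ∑ i, x i ^ k ≤ k * adjForm E x := by
  set c := ∑ i, x i ^ k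
  have hc : 0 ≤ c := sum_nonneg fun i _ => hk.pow_nonneg _
  obtain hc_zero | hc_pos := hc.eq_or_lt
  · have hx : x = (0 : ℝ) • x := by
      ext i
      have hxi := (sum_eq_zero_iff_of_nonneg fun i _ => hk.pow_nonneg (x i)).1 hc_zero.symm i
        (mem_univ i)
      simpa [hk0] using hxi
    have hform : adjForm E x = 0 := by rw [hx, adjForm_smul huniform, zero_pow hk0, zero_mul]
    rw [← hc_zero, hform]
    simp
  · set s := c⁻¹ ^ ((k : ℝ)⁻¹)
    have hs : s ^ k = c⁻¹ := Real.rpow_inv_natCast_pow (inv_nonneg.2 hc) hk0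
    have hmem : (k : ℝ) * adjForm E (s • x) ∈ unitSphereValues k E := by
      refine ⟨s • x, ?_, rfl⟩
      simp only [Pi.smul_apply, smul_eq_mul, mul_pow, ← mul_sum, hs]
      exact inv_mul_cancel₀ hc_pos.ne'
    have hle := hlam.2 hmem
    rw [adjForm_smul huniform, hs] at hle
    calc lam * c ≤ k * (c⁻¹ * adjForm E x) * c := mul_le_mul_of_nonneg_right hle hc
      _ = k * adjForm E x := by field_simp

lemma neg_of_isLeast_unitSphereValues (hk : Even k) (hk0 : k ≠ 0) (huniform : ∀ e ∈ E, #e = k)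
    (hE : E.Nonempty) (hlam : IsLeast (unitSphereValues k E) lam) : lam < 0 := by
  classical
  obtain ⟨e₀, he₀⟩ := hE
  obtain ⟨v, hv⟩ : e₀.Nonempty := card_pos.1 (by rw [huniform e₀ he₀]; omega)
  set x : V → ℝ := fun i => if i ∈ e₀ then (if i = v then -1 else 1) else 0
  have hsum : ∑ i, x i ^ k = k := by
    have hxk : ∀ i, x i ^ k = if i ∈ e₀ then 1 else 0 := fun i => by
      by_cases h₁ : i ∈ e₀ <;> by_cases h₂ : i = v <;> simp [x, h₁, h₂, hk.neg_one_pow, hk0]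
    simp [hxk, huniform e₀ he₀]
  have hprod : ∀ e ∈ E, ∏ i ∈ e, x i = if e = e₀ then -1 else 0 := by
    intro e he
    split_ifs with h
    · subst h
      rw [← mul_prod_erase e x hv, prod_eq_one fun i hi => by
        simp [x, ne_of_mem_erase hi, mem_of_mem_erase hi]]
      simp [x, hv]
    · obtain ⟨w, hw, hw₀⟩ := not_subset.1 fun hsub => h <|
        eq_of_subset_of_card_le hsub (by rw [huniform e he, huniform e₀ he₀])
      exact prod_eq_zero hw (by simp [x, hw₀])
  have hle := mul_sum_pow_le_of_isLeast hk hk0 huniform hlam x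
  rw [hsum, adjForm, sum_congr rfl hprod, sum_ite_eq' E e₀, if_pos he₀] at hle
  have hk' : (0 : ℝ) < k := by positivity
  nlinarith

/- The first-order condition in the coordinate `v`: by `mul_sum_pow_le_of_isLeast` the polynomial
`s ↦ k · adjForm E (x[v ↦ s]) - λ ∑ x[v ↦ s]^k` is nonnegative, and it vanishes at `s = x v`. -/
lemma sum_prod_erase_eq_of_isLeast [DecidableEq V] (hk : Even k) (hk0 : k ≠ 0)
    (huniform : ∀ e ∈ E, #e = k) (hlam : IsLeast (unitSphereValues k E) lam) (x : V → ℝ)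
    (hx : k * adjForm E x = lam * ∑ i, x i ^ k) (v : V) :
    ∑ e ∈ E with v ∈ e, ∏ i ∈ e.erase v, x i = lam * x v ^ (k - 1) := by
  set A := ∑ e ∈ E with v ∉ e, ∏ i ∈ e, x i
  set P := ∑ e ∈ E with v ∈ e, ∏ i ∈ e.erase v, x i
  set R := ∑ i ∈ univ \ {v}, x i ^ k
  have hsum : ∀ s, ∑ i, Function.update x v s i ^ k = s ^ k + R := fun s => by
    simp_rw [Function.apply_update (fun _ y => y ^ k) x v s]
    exact sum_update_of_mem (mem_univ v) _ _
  set f : ℝ → ℝ := fun s => k * (A + s * P) - lam * (s ^ k + R)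
  have hmin : ∀ s, f (x v) ≤ f s := by
    intro s
    have hs := mul_sum_pow_le_of_isLeast hk hk0 huniform hlam (Function.update x v s)
    rw [← Function.update_eq_self v x, adjForm_update, hsum] at hx
    rw [adjForm_update, hsum] at hs
    simp only [f] at hx ⊢
    linarith
  have hderiv : HasDerivAt f (k * P - lam * (k * x v ^ (k - 1))) (x v) :=
    (((((hasDerivAt_id (x v)).mul_const P).const_add A).const_mul (k : ℝ)).sub
      (((hasDerivAt_pow k (x v)).add_const R).const_mul lam)).congr_deriv (by simp)
  have hloc : IsLocalMin f (x v) := Filter.Eventually.of_forall hmin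
  have hcrit := hloc.hasDerivAt_eq_zero hderiv
  have hk' : (k : ℝ) ≠ 0 := by exact_mod_cast hk0
  exact mul_left_cancel₀ hk' (by linear_combination hcrit)

end AdjacencyForm

section HoffmanVector

variable {V : Type*} [DecidableEq V]

def IsTIndependent (E : Finset (Finset V)) (t : ℕ) (S : Finset V) : Prop :=
  ∀ e ∈ E, #(e ∩ S) = 0 ∨ #(e ∩ S) = t

def hoffmanVector (S : Finset V) (r : ℝ) (i : V) : ℝ := if i ∈ S then r else -1

lemma prod_hoffmanVector (S : Finset V) (r : ℝ) (e : Finset V) :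
    ∏ i ∈ e, hoffmanVector S r i = r ^ #(e ∩ S) * (-1) ^ #(e \ S) := by
  simp only [hoffmanVector, prod_ite, prod_const, filter_mem_eq_inter, filter_notMem_eq_sdiff]

variable {k t : ℕ} {E : Finset (Finset V)} {S : Finset V}

lemma prod_hoffmanVector_of_card_eq (hk : Even k) (ht : Odd t) (htk : t ≤ k) {e : Finset V}
    (he : #e = k) (heS : #(e ∩ S) = 0 ∨ #(e ∩ S) = t) (r : ℝ) :
    ∏ i ∈ e, hoffmanVector S r i = if (e ∩ S).Nonempty then -r ^ t else 1 := by
  have hsdiff : #(e \ S) = k - #(e ∩ S) := by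
    have := card_sdiff_add_card_inter e S
    omega
  rw [prod_hoffmanVector, hsdiff]
  rcases heS with hzero | hmeet
  · rw [hzero, if_neg (by rw [← card_pos]; omega), pow_zero, one_mul, Nat.sub_zero,
      hk.neg_one_pow]
  · rw [hmeet, if_pos (card_pos.1 (hmeet ▸ ht.pos)), (Nat.Even.sub_odd htk hk ht).neg_one_pow]
    ring

lemma sum_prod_hoffmanVector (hk : Even k) (ht : Odd t) (htk : t ≤ k)
    (huniform : ∀ e ∈ E, #e = k) (hS : IsTIndependent E t S) (r : ℝ) {F : Finset (Finset V)}
    (hF : F ⊆ E) :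
    ∑ e ∈ F, ∏ i ∈ e, hoffmanVector S r i = #F - #{e ∈ F | (e ∩ S).Nonempty} * (1 + r ^ t) := by
  rw [sum_congr rfl fun e he =>
      prod_hoffmanVector_of_card_eq hk ht htk (huniform e (hF he)) (hS e (hF he)) r,
    sum_ite, sum_const, sum_const, nsmul_eq_mul, nsmul_eq_mul,
    ← card_filter_add_card_filter_not (s := F) (fun e => (e ∩ S).Nonempty)]
  push_cast
  ring

lemma sum_pow_hoffmanVector [Fintype V] (hk : Even k) (S : Finset V) (r : ℝ) :
    ∑ i, hoffmanVector S r i ^ k = #S * r ^ k + (Fintype.card V - #S) := by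
  simp only [hoffmanVector, apply_ite (· ^ k), hk.neg_one_pow, sum_ite, sum_const,
    filter_mem_eq_inter, univ_inter, filter_notMem_eq_sdiff, card_univ_sdiff, nsmul_eq_mul,
    mul_one]
  rw [Nat.cast_sub (card_le_univ S)]

lemma sum_card_filter_mem_eq_sum_card_inter {α : Type*} [DecidableEq α] (s : Finset α)
    (B : Finset (Finset α)) : ∑ a ∈ s, #{b ∈ B | a ∈ b} = ∑ b ∈ B, #(b ∩ s) := by
  simp_rw [inter_comm _ s, ← filter_mem_eq_inter, card_eq_sum_ones, sum_filter]
  exact sum_comm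

lemma sum_degree_of_isTIndependent (hS : IsTIndependent E t S) :
    ∑ i ∈ S, #{e ∈ E | i ∈ e} = t * #{e ∈ E | (e ∩ S).Nonempty} := by
  rw [sum_card_filter_mem_eq_sum_card_inter, card_eq_sum_ones, sum_filter, mul_sum]
  refine sum_congr rfl fun e he => ?_
  split_ifs with hne
  · rw [mul_one]
    exact (hS e he).resolve_left (card_pos.2 hne).ne'
  · rw [not_nonempty_iff_eq_empty.1 hne, card_empty, mul_zero]

lemma mul_adjForm_hoffmanVector_add_sum_degree_sub (hk : Even k) (ht : Odd t) (htk : t ≤ k)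
    (huniform : ∀ e ∈ E, #e = k) (hS : IsTIndependent E t S) (r δ : ℝ) :
    t * (k * adjForm E (hoffmanVector S r)) +
        k * (1 + r ^ t) * ∑ i ∈ S, ((#{e ∈ E | i ∈ e} : ℝ) - δ) =
      k * (t * #E - #S * δ * (1 + r ^ t)) := by
  have hdeg : ∑ i ∈ S, (#{e ∈ E | i ∈ e} : ℝ) = t * #{e ∈ E | (e ∩ S).Nonempty} := by
    exact_mod_cast sum_degree_of_isTIndependent hS
  rw [adjForm, sum_prod_hoffmanVector hk ht htk huniform hS r subset_rfl, sum_sub_distrib, hdeg,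
    sum_const, nsmul_eq_mul]
  ring

lemma sum_prod_erase_hoffmanVector_of_notMem (hk : Even k) (ht : Odd t) (htk : t ≤ k)
    (huniform : ∀ e ∈ E, #e = k) (hS : IsTIndependent E t S) (r : ℝ) {v : V} (hv : v ∉ S) :
    ∑ e ∈ E with v ∈ e, ∏ i ∈ e.erase v, hoffmanVector S r i =
      #{e ∈ E | v ∈ e ∧ (e ∩ S).Nonempty} * (1 + r ^ t) - #{e ∈ E | v ∈ e} := by
  have hprod : ∀ e ∈ {e ∈ E | v ∈ e},
      ∏ i ∈ e.erase v, hoffmanVector S r i = -∏ i ∈ e, hoffmanVector S r i := by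
    intro e he
    rw [← mul_prod_erase e _ (mem_filter.1 he).2]
    simp [hoffmanVector, hv]
  rw [sum_congr rfl hprod, sum_neg_distrib,
    sum_prod_hoffmanVector hk ht htk huniform hS r (filter_subset _ _), filter_filter]
  ring

lemma hoffmanVector_attains_of_le [Fintype V] {lam : ℝ} (hk : Even k) (hk0 : k ≠ 0) (ht : Odd t)
    (htk : t ≤ k) (huniform : ∀ e ∈ E, #e = k) (hlam : IsLeast (unitSphereValues k E) lam)
    (hS : IsTIndependent E t S) {r : ℝ} (hr : 0 ≤ r) {δ : ℕ} (hδ : ∀ i, δ ≤ #{e ∈ E | i ∈ e})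
    (hle : k * (t * #E - #S * δ * (1 + r ^ t)) ≤ t * lam * ∑ i, hoffmanVector S r i ^ k) :
    (∀ i ∈ S, #{e ∈ E | i ∈ e} = δ) ∧
      k * adjForm E (hoffmanVector S r) = lam * ∑ i, hoffmanVector S r i ^ k := by
  set x := hoffmanVector S r
  have hexcess : ∀ i ∈ S, 0 ≤ (#{e ∈ E | i ∈ e} : ℝ) - δ :=
    fun i _ => sub_nonneg.2 (by exact_mod_cast hδ i)
  have hdecomp := mul_adjForm_hoffmanVector_add_sum_degree_sub hk ht htk huniform hS r δ
  have hbound := mul_sum_pow_le_of_isLeast hk hk0 huniform hlam x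
  have ht0 : (0 : ℝ) < t := by exact_mod_cast ht.pos
  have hK : (0 : ℝ) < k * (1 + r ^ t) := by
    have hkR : (0 : ℝ) < k := by exact_mod_cast Nat.pos_of_ne_zero hk0
    positivity
  have hzero : ∑ i ∈ S, ((#{e ∈ E | i ∈ e} : ℝ) - δ) = 0 := by
    nlinarith [sum_nonneg hexcess, mul_le_mul_of_nonneg_left hbound ht0.le]
  refine ⟨fun i hi => ?_, ?_⟩
  · exact_mod_cast sub_eq_zero.1 ((sum_eq_zero_iff_of_nonneg hexcess).1 hzero i hi)
  · rw [hzero, mul_zero, add_zero] at hdecomp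
    nlinarith

end HoffmanVector

section HoffmanRatio

variable {k t : ℕ} {δ lam : ℝ}

noncomputable def hoffmanRatio (k t : ℕ) (δ lam : ℝ) : ℝ := (δ / -lam) ^ ((1 : ℝ) / (k - t))

lemma hoffmanRatio_nonneg (hδ : 0 ≤ δ) (hlam : lam < 0) : 0 ≤ hoffmanRatio k t δ lam :=
  Real.rpow_nonneg (div_nonneg hδ (by linarith)) _

lemma hoffmanRatio_pow_mul (hδ : 0 ≤ δ) (hlam : lam < 0) :
    hoffmanRatio k t δ lam ^ t * (-lam) ^ ((t : ℝ) / (k - t)) = δ ^ ((t : ℝ) / (k - t)) := by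
  rw [hoffmanRatio, ← Real.rpow_mul_natCast (div_nonneg hδ (by linarith)),
    one_div_mul_eq_div, Real.div_rpow hδ (by linarith),
    div_mul_cancel₀ _ (Real.rpow_pos_of_pos (by linarith) _).ne']

lemma hoffmanRatio_pow_sub (htk : t < k) (hδ : 0 ≤ δ) (hlam : lam < 0) :
    hoffmanRatio k t δ lam ^ (k - t) = δ / -lam := by
  have hkt : (k : ℝ) - t ≠ 0 := sub_ne_zero.2 (by exact_mod_cast htk.ne')
  rw [hoffmanRatio, ← Real.rpow_mul_natCast (div_nonneg hδ (by linarith)), Nat.cast_sub htk.le,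
    one_div_mul_cancel hkt, Real.rpow_one]

lemma rpow_div_sub_eq_mul (htk : t < k) {x : ℝ} (hx : 0 ≤ x) :
    x ^ ((k : ℝ) / (k - t)) = x * x ^ ((t : ℝ) / (k - t)) := by
  have hkt : (0 : ℝ) < k - t := sub_pos.2 (by exact_mod_cast htk)
  rw [show (k : ℝ) / (k - t) = 1 + t / (k - t) by field_simp; ring,
    Real.rpow_add' hx (by positivity), Real.rpow_one]

lemma mul_sub_eq_of_hoffman_bound_eq (ht0 : 0 < t) (htk : t < k) {m n α : ℝ} (hδ : 0 ≤ δ)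
    (hlam : lam < 0)
    (heq : α = t * (k * m - n * lam) * (-lam) ^ ((t : ℝ) / (k - t)) /
      ((k - t) * δ ^ ((k : ℝ) / (k - t)) + (k * δ - t * lam) * (-lam) ^ ((t : ℝ) / (k - t)))) :
    k * (t * m - α * δ * (1 + hoffmanRatio k t δ lam ^ t)) =
      t * lam * (α * hoffmanRatio k t δ lam ^ k + (n - α)) := by
  set r := hoffmanRatio k t δ lam
  set B := (-lam) ^ ((t : ℝ) / (k - t))
  set D := δ ^ ((t : ℝ) / (k - t))
  have hB : 0 < B := Real.rpow_pos_of_pos (by linarith) _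
  have hkt : (0 : ℝ) < k - t := sub_pos.2 (by exact_mod_cast htk)
  have hrt : r ^ t * B = D := hoffmanRatio_pow_mul hδ hlam
  have hrk : r ^ k * B * -lam = δ * D := by
    rw [← Nat.add_sub_of_le htk.le, pow_add, mul_right_comm (r ^ t), hrt,
      hoffmanRatio_pow_sub htk hδ hlam, mul_assoc, div_mul_cancel₀ _ (neg_ne_zero.2 hlam.ne),
      mul_comm]
  have hden : 0 < (k - t) * (δ * D) + (k * δ - t * lam) * B := by
    have htR : (0 : ℝ) < t := by exact_mod_cast ht0
    have hcoef : 0 < (k : ℝ) * δ - t * lam := by nlinarith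
    positivity
  rw [rpow_div_sub_eq_mul htk hδ, eq_div_iff hden.ne'] at heq
  refine mul_right_cancel₀ hB.ne' ?_
  linear_combination (-(k : ℝ) * α * δ) * hrt + (t : ℝ) * α * hrk - heq

lemma eq_div_of_mul_one_add_hoffmanRatio_pow (htk : t < k) (hδ : 0 ≤ δ) (hlam : lam < 0) {c d : ℝ}
    (h : c * (1 + hoffmanRatio k t δ lam ^ t) = d - lam) :
    c = ((-lam) ^ ((k : ℝ) / (k - t)) + d * (-lam) ^ ((t : ℝ) / (k - t))) /
      (δ ^ ((t : ℝ) / (k - t)) + (-lam) ^ ((t : ℝ) / (k - t))) := by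
  have hB : 0 < (-lam) ^ ((t : ℝ) / (k - t)) := Real.rpow_pos_of_pos (by linarith) _
  rw [rpow_div_sub_eq_mul htk (by linarith),
    eq_div_iff (add_pos_of_nonneg_of_pos (Real.rpow_nonneg hδ _) hB).ne',
    ← hoffmanRatio_pow_mul hδ hlam]
  linear_combination (-lam) ^ ((t : ℝ) / (k - t)) * h

end HoffmanRatio

theorem hoffman_bound_even_hypergraph_condition_of_equality_general
    {V : Type*} [Fintype V] [DecidableEq V]
    (k t : ℕ) (hk : Even k) (ht : Odd t) (htk : t < k)
    (E : Finset (Finset V)) (huniform : ∀ e ∈ E, e.card = k) (hm : 1 ≤ E.card)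
    (δ : ℕ) (hδ : IsLeast (Set.range fun i : V => (E.filter fun e => i ∈ e).card) δ)
    (lam : ℝ)
    (hlam : IsLeast {y : ℝ | ∃ x : V → ℝ, ∑ i, x i ^ k = 1 ∧
      y = k * ∑ e ∈ E, ∏ i ∈ e, x i} lam)
    (α : ℕ)
    (hα : IsGreatest {c : ℕ | ∃ S : Finset V,
      (∀ e ∈ E, (e ∩ S).card = 0 ∨ (e ∩ S).card = t) ∧ S.card = c} α)
    (heq : (α : ℝ) = t * (k * E.card - Fintype.card V * lam) * (-lam) ^ ((t : ℝ) / (k - t)) /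
      ((k - t) * (δ : ℝ) ^ ((k : ℝ) / (k - t)) +
        (k * δ - t * lam) * (-lam) ^ ((t : ℝ) / (k - t)))) :
    ∃ S : Finset V,
      (∀ e ∈ E, (e ∩ S).card = 0 ∨ (e ∩ S).card = t) ∧
      S.card = α ∧
      (∀ i ∈ S, (E.filter fun e => i ∈ e).card = δ) ∧
      (∀ i ∉ S,
        ((E.filter fun e => i ∈ e ∧ (e ∩ S).Nonempty).card : ℝ) =
          ((-lam) ^ ((k : ℝ) / (k - t)) +
            ((E.filter fun e => i ∈ e).card : ℝ) * (-lam) ^ ((t : ℝ) / (k - t))) /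
            ((δ : ℝ) ^ ((t : ℝ) / (k - t)) + (-lam) ^ ((t : ℝ) / (k - t)))) := by
  have hk0 : k ≠ 0 := by omega
  obtain ⟨S, hS, rfl⟩ := hα.1
  have hlam0 : lam < 0 := neg_of_isLeast_unitSphereValues hk hk0 huniform (card_pos.1 hm) hlam
  set r := hoffmanRatio k t δ lam
  have hvalue := mul_sub_eq_of_hoffman_bound_eq ht.pos htk δ.cast_nonneg hlam0 heq
  rw [← sum_pow_hoffmanVector hk S r] at hvalue
  obtain ⟨hdegS, hcrit⟩ := hoffmanVector_attains_of_le hk hk0 ht htk.le huniform hlam hS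
    (hoffmanRatio_nonneg δ.cast_nonneg hlam0) (fun i => hδ.2 ⟨i, rfl⟩) hvalue.le
  refine ⟨S, hS, rfl, hdegS, fun i hi => eq_div_of_mul_one_add_hoffmanRatio_pow htk
    δ.cast_nonneg hlam0 ?_⟩
  have hlagrange := sum_prod_erase_eq_of_isLeast hk hk0 huniform hlam _ hcrit i
  rw [sum_prod_erase_hoffmanVector_of_notMem hk ht htk.le huniform hS r hi, hoffmanVector,
    if_neg hi, (Nat.Even.sub_odd (by omega) hk odd_one).neg_one_pow] at hlagrange
  linarith

/-- **Hoffman-type bound for even uniform hypergraphs** (Theorem 3.1, necessity of the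
equality condition). If the `t`-independence number attains the Hoffman-type bound, then
there is a maximum `t`-independent set `S` all of whose vertices have minimum degree `δ`,
and every vertex `i ∉ S` lies in exactly
`((−λ)^{k/(k−t)} + d_i(−λ)^{t/(k−t)}) / (δ^{t/(k−t)} + (−λ)^{t/(k−t)})` edges meeting `S`. -/
theorem hoffman_bound_even_hypergraph_condition_of_equality
    {V : Type*} [Fintype V] [DecidableEq V]
    (k t : ℕ) (hk : Even k) (ht : Odd t) (ht0 : 0 < t) (htk : t < k)
    (E : Finset (Finset V)) (huniform : ∀ e ∈ E, e.card = k) (hm : 1 ≤ E.card)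
    (δ : ℕ) (hδ : IsLeast (Set.range fun i : V => (E.filter fun e => i ∈ e).card) δ)
    (lam : ℝ)
    (hlam : IsLeast {y : ℝ | ∃ x : V → ℝ, ∑ i, x i ^ k = 1 ∧
      y = k * ∑ e ∈ E, ∏ i ∈ e, x i} lam)
    (α : ℕ)
    (hα : IsGreatest {c : ℕ | ∃ S : Finset V,
      (∀ e ∈ E, (e ∩ S).card = 0 ∨ (e ∩ S).card = t) ∧ S.card = c} α)
    (heq : (α : ℝ) = t * (k * E.card - Fintype.card V * lam) * (-lam) ^ ((t : ℝ) / (k - t)) /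
      ((k - t) * (δ : ℝ) ^ ((k : ℝ) / (k - t)) +
        (k * δ - t * lam) * (-lam) ^ ((t : ℝ) / (k - t)))) :
    ∃ S : Finset V,
      (∀ e ∈ E, (e ∩ S).card = 0 ∨ (e ∩ S).card = t) ∧
      S.card = α ∧
      (∀ i ∈ S, (E.filter fun e => i ∈ e).card = δ) ∧
      (∀ i ∉ S,
        ((E.filter fun e => i ∈ e ∧ (e ∩ S).Nonempty).card : ℝ) =
          ((-lam) ^ ((k : ℝ) / (k - t)) +
            ((E.filter fun e => i ∈ e).card : ℝ) * (-lam) ^ ((t : ℝ) / (k - t))) /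
            ((δ : ℝ) ^ ((t : ℝ) / (k - t)) + (-lam) ^ ((t : ℝ) / (k - t)))) :=
  hoffman_bound_even_hypergraph_condition_of_equality_general k t hk ht htk E huniform hm δ hδ lam
    hlam α hα heq
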